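/- arXiv:2507.19654 — 6 statements merged into one kernel-verified Lean document; each statement's English description precedes it below -/
import Mathlib

section
/- Let (Ω, F, ℙ) be a probability space; let c_L < c_U be fixed real numbers and ĉ_L, ĉ_U real random variables. Suppose ℙ(𝒞) ≥ 1 − α, where 𝒞 is the event { ĉ_L ≤ c_L and c_U ≤ ĉ_U }. Define the oracle classification: 1 if c_L > 0, 0 if c_U < 0, and ∅ (non-classification) if c_L ≤ 0 ≤ c_U; define the maximum score classification identically with (ĉ_L, ĉ_U) in place of (c_L, c_U); let ℳ be the event that the two classifications differ. Assume there exists ε > 0 such that either c_L > ε or c_U < −ε. Then ℙ(ℳ) ≤ α + ℙ(ĉ_L − c_L ≤ −ε) + ℙ(ĉ_U − c_U ≥ ε). -/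
open MeasureTheory

/-- The three classification outcomes: classify as 1, classify as 0, or abstain (∅). -/
inductive Cls
  | one
  | zero
  | abstain

/-- The classification rule based on bounds `[l, u]`: classify as 1 if `l > 0`,
as 0 if `u < 0`, and abstain otherwise (i.e. if `l ≤ 0 ≤ u`). -/
noncomputable def classify (l u : ℝ) : Cls :=
  if 0 < l then Cls.one else if u < 0 then Cls.zero else Cls.abstain

theorem stmt3 {Ω : Type*} [MeasurableSpace Ω] (P : Measure Ω) [IsProbabilityMeasure P]
    (cL cU : ℝ) (hcc : cL < cU)
    (cLhat cUhat : Ω → ℝ) (hmL : Measurable cLhat) (hmU : Measurable cUhat)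
    (α : ℝ)
    (hcov : P {ω | cLhat ω ≤ cL ∧ cU ≤ cUhat ω} ≥ ENNReal.ofReal (1 - α))
    (ε : ℝ) (hε : 0 < ε) (hmargin : ε < cL ∨ cU < -ε) :
    P {ω | classify (cLhat ω) (cUhat ω) ≠ classify cL cU}
      ≤ ENNReal.ofReal α + P {ω | cLhat ω - cL ≤ -ε} + P {ω | cUhat ω - cU ≥ ε} := by
  set C : Set Ω := {ω | cLhat ω ≤ cL ∧ cU ≤ cUhat ω} with hC
  have hCmeas : MeasurableSet C := by
    apply MeasurableSet.inter
    · exact measurableSet_le hmL measurable_const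
    · exact measurableSet_le measurable_const hmU
  have hCc : P Cᶜ ≤ ENNReal.ofReal α := by
    have h1 : (1 : ENNReal) ≤ ENNReal.ofReal α + P C := by
      calc (1 : ENNReal) = ENNReal.ofReal (α + (1 - α)) := by norm_num
        _ ≤ ENNReal.ofReal α + ENNReal.ofReal (1 - α) := ENNReal.ofReal_add_le
        _ ≤ ENNReal.ofReal α + P C := by exact add_le_add_right hcov _
    have := prob_compl_eq_one_sub hCmeas (μ := P)
    rw [this]
    exact tsub_le_iff_right.mpr h1
  rcases hmargin with h | h
  · -- cL > ε, oracle classifies as one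
    have hsub : {ω | classify (cLhat ω) (cUhat ω) ≠ classify cL cU}
        ⊆ {ω | cLhat ω - cL ≤ -ε} := by
      intro ω hω
      simp only [Set.mem_setOf_eq, classify] at hω ⊢
      rw [if_pos (hε.trans h)] at hω
      by_contra hcon
      push_neg at hcon
      have : 0 < cLhat ω := by linarith
      rw [if_pos this] at hω
      exact hω rfl
    calc P {ω | classify (cLhat ω) (cUhat ω) ≠ classify cL cU}
        ≤ P {ω | cLhat ω - cL ≤ -ε} := measure_mono hsub
      _ ≤ ENNReal.ofReal α + P {ω | cLhat ω - cL ≤ -ε} + P {ω | cUhat ω - cU ≥ ε} := by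
          rw [add_assoc]
          exact le_add_of_nonneg_of_le (zero_le) (le_add_of_le_of_nonneg le_rfl (zero_le))
  · -- cU < -ε, oracle classifies as zero
    have hsub : {ω | classify (cLhat ω) (cUhat ω) ≠ classify cL cU}
        ⊆ Cᶜ ∪ {ω | cUhat ω - cU ≥ ε} := by
      intro ω hω
      simp only [Set.mem_setOf_eq, classify] at hω
      have hcL0 : ¬ (0 < cL) := by linarith
      have hcU0 : cU < 0 := by linarith
      rw [if_neg hcL0, if_pos hcU0] at hω
      by_contra hcon
      simp only [Set.mem_union, Set.mem_compl_iff, Set.mem_setOf_eq, hC, not_or, not_not] at hcon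
      obtain ⟨⟨h1, h2⟩, h3⟩ := hcon
      push_neg at h3
      have : ¬ (0 < cLhat ω) := by linarith
      rw [if_neg this, if_pos (by linarith : cUhat ω < 0)] at hω
      exact hω rfl
    calc P {ω | classify (cLhat ω) (cUhat ω) ≠ classify cL cU}
        ≤ P (Cᶜ ∪ {ω | cUhat ω - cU ≥ ε}) := measure_mono hsub
      _ ≤ P Cᶜ + P {ω | cUhat ω - cU ≥ ε} := measure_union_le _ _
      _ ≤ ENNReal.ofReal α + P {ω | cUhat ω - cU ≥ ε} := add_le_add_left hCc _
      _ ≤ ENNReal.ofReal α + P {ω | cLhat ω - cL ≤ -ε} + P {ω | cUhat ω - cU ≥ ε} := by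
          exact add_le_add_left (le_add_of_le_of_nonneg le_rfl (zero_le)) _
end

section
/- Let (Ω, F, ℙ) be a probability space; let X_* be a random vector in ℝ^q, c_L, c_U : ℝ^q → ℝ functions with c_L(x) < c_U(x) for all x, and ĉ_L, ĉ_U maps assigning to each x ∈ ℝ^q a real random variable. Suppose there is a measurable event 𝒞 with ℙ(𝒞) ≥ 1 − α such that on 𝒞, ĉ_L(x) ≤ c_L(x) and c_U(x) ≤ ĉ_U(x) for all x. Suppose there are constants M_L, M_U > 0 and ε > 0 such that ℙ(0 < c_L(X_*) ≤ ε) ≤ M_L·ε and ℙ(−ε ≤ c_U(X_*) < 0) ≤ M_U·ε. Define the oracle classification at X_*: 1 if c_L(X_*) > 0, 0 if c_U(X_*) < 0, and ∅ (non-classification) if c_L(X_*) ≤ 0 ≤ c_U(X_*); define the maximum score classification identically with (ĉ_L(X_*), ĉ_U(X_*)); let ℳ be the event the two classifications differ. Then ℙ(ℳ) ≤ α + ℙ(ĉ_L(X_*) − c_L(X_*) ≤ −ε) + ℙ(ĉ_U(X_*) − c_U(X_*) ≥ ε) + M_L·ε + M_U·ε. -/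
open MeasureTheory

theorem stmt4 {Ω : Type*} [MeasurableSpace Ω] (P : Measure Ω) [IsProbabilityMeasure P]
    (q : ℕ) (Xstar : Ω → (Fin q → ℝ)) (hXstar : Measurable Xstar)
    (cL cU : (Fin q → ℝ) → ℝ) (hcc : ∀ x, cL x < cU x)
    (cLhat cUhat : (Fin q → ℝ) → Ω → ℝ)
    (hmL : ∀ x, Measurable (cLhat x)) (hmU : ∀ x, Measurable (cUhat x))
    (α : ℝ) (C : Set Ω) (hCmeas : MeasurableSet C)
    (hCcov : P C ≥ ENNReal.ofReal (1 - α))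
    (hcov : ∀ ω ∈ C, ∀ x, cLhat x ω ≤ cL x ∧ cU x ≤ cUhat x ω)
    (ML MU ε : ℝ) (hML : 0 < ML) (hMU : 0 < MU) (hε : 0 < ε)
    (hmarginL : P {ω | 0 < cL (Xstar ω) ∧ cL (Xstar ω) ≤ ε} ≤ ENNReal.ofReal (ML * ε))
    (hmarginU : P {ω | -ε ≤ cU (Xstar ω) ∧ cU (Xstar ω) < 0} ≤ ENNReal.ofReal (MU * ε)) :
    P {ω | classify (cLhat (Xstar ω) ω) (cUhat (Xstar ω) ω)
          ≠ classify (cL (Xstar ω)) (cU (Xstar ω))}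
      ≤ ENNReal.ofReal α
        + P {ω | cLhat (Xstar ω) ω - cL (Xstar ω) ≤ -ε}
        + P {ω | cUhat (Xstar ω) ω - cU (Xstar ω) ≥ ε}
        + ENNReal.ofReal (ML * ε) + ENNReal.ofReal (MU * ε) := by
  set A := {ω | cLhat (Xstar ω) ω - cL (Xstar ω) ≤ -ε} with hAdef
  set B := {ω | cUhat (Xstar ω) ω - cU (Xstar ω) ≥ ε} with hBdef
  set SL := {ω | 0 < cL (Xstar ω) ∧ cL (Xstar ω) ≤ ε} with hSLdef
  set SU := {ω | -ε ≤ cU (Xstar ω) ∧ cU (Xstar ω) < 0} with hSUdef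
  have hsub : {ω | classify (cLhat (Xstar ω) ω) (cUhat (Xstar ω) ω)
          ≠ classify (cL (Xstar ω)) (cU (Xstar ω))} ⊆ Cᶜ ∪ A ∪ B ∪ SL ∪ SU := by
    intro ω hω
    by_contra hmem
    simp only [Set.mem_union, not_or] at hmem
    obtain ⟨⟨⟨⟨hC, hA⟩, hB⟩, hSL⟩, hSU⟩ := hmem
    rw [Set.notMem_compl_iff] at hC
    obtain ⟨hl, hu⟩ := hcov ω hC (Xstar ω)
    apply hω
    simp only [hAdef, hBdef, hSLdef, hSUdef, Set.mem_setOf_eq, not_and, not_le, not_lt,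
      ge_iff_le] at hA hB hSL hSU
    unfold classify
    by_cases h1 : 0 < cL (Xstar ω)
    · have h2 : 0 < cLhat (Xstar ω) ω := by
        have := hSL h1
        linarith
      simp [h1, h2]
    · have hlh : ¬ 0 < cLhat (Xstar ω) ω := by push_neg at h1 ⊢; linarith
      by_cases h2 : cU (Xstar ω) < 0
      · have hu' : cU (Xstar ω) < -ε := by
          by_contra h; push_neg at h; linarith [hSU h]
        have h3 : cUhat (Xstar ω) ω < 0 := by linarith
        simp [h1, h2, hlh, h3]
      · have h3 : ¬ cUhat (Xstar ω) ω < 0 := by push_neg at h2 ⊢; linarith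
        simp [h1, h2, hlh, h3]
  have hPC : P Cᶜ ≤ ENNReal.ofReal α := by
    rw [prob_compl_eq_one_sub hCmeas]
    rw [tsub_le_iff_right]
    calc (1 : ENNReal) = ENNReal.ofReal 1 := by simp
      _ ≤ ENNReal.ofReal (α + (1 - α)) := by simp
      _ ≤ ENNReal.ofReal α + ENNReal.ofReal (1 - α) := ENNReal.ofReal_add_le
      _ ≤ ENNReal.ofReal α + P C := add_le_add_right hCcov _
  calc P {ω | classify (cLhat (Xstar ω) ω) (cUhat (Xstar ω) ω)
          ≠ classify (cL (Xstar ω)) (cU (Xstar ω))}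
      ≤ P (Cᶜ ∪ A ∪ B ∪ SL ∪ SU) := measure_mono hsub
    _ ≤ P (Cᶜ ∪ A ∪ B ∪ SL) + P SU := measure_union_le _ _
    _ ≤ (P (Cᶜ ∪ A ∪ B) + P SL) + P SU :=
        add_le_add_left (measure_union_le _ _) _
    _ ≤ ((P (Cᶜ ∪ A) + P B) + P SL) + P SU :=
        add_le_add_left (add_le_add_left (measure_union_le _ _) _) _
    _ ≤ (((P Cᶜ + P A) + P B) + P SL) + P SU :=
        add_le_add_left (add_le_add_left (add_le_add_left (measure_union_le _ _) _) _) _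
    _ ≤ ENNReal.ofReal α + P A + P B + ENNReal.ofReal (ML * ε) + ENNReal.ofReal (MU * ε) := by
        gcongr
end

section
/- Let (Ω, F, ℙ) be a probability space; let c_L < c_U be fixed real numbers, ĉ_L, ĉ_U real random variables, and 𝒞 the event { ĉ_L ≤ c_L and c_U ≤ ĉ_U } with ℙ(𝒞) ≥ 1 − α. Let r be a {0,1}-valued random variable with ℙ(r = 1) = ℙ(r = 0) = 1/2, independent of (ĉ_L, ĉ_U). Define M_OR = 1[c_L > 0] + 1[c_U < 0]·0 + r·1[c_L ≤ 0 ≤ c_U] interpreted as: M_OR = 1 if c_L > 0, M_OR = 0 if c_U < 0, and M_OR = r if c_L ≤ 0 ≤ c_U; define M_MS identically with (ĉ_L, ĉ_U) and the same r. Assume there exists ε > 0 such that either c_L > ε or c_U < −ε. Then ℙ(M_OR ≠ M_MS) ≤ α + (1/2)·ℙ(ĉ_L − c_L ≤ −ε) + (1/2)·ℙ(ĉ_U − c_U ≥ ε). -/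
open MeasureTheory ProbabilityTheory

/-- The random-classification rule based on bounds `[l, u]` and coin `r`:
classify as 1 (`true`) if `l > 0`, as 0 (`false`) if `u < 0`, and as the
outcome of the coin `r` otherwise (i.e. if `l ≤ 0 ≤ u`). -/
noncomputable def classifyRC (l u : ℝ) (r : Bool) : Bool :=
  if 0 < l then true else if u < 0 then false else r

theorem stmt5 {Ω : Type*} [MeasurableSpace Ω] (P : Measure Ω) [IsProbabilityMeasure P]
    (cL cU : ℝ) (hcc : cL < cU)
    (cLhat cUhat : Ω → ℝ) (hmL : Measurable cLhat) (hmU : Measurable cUhat)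
    (α : ℝ)
    (hcov : P {ω | cLhat ω ≤ cL ∧ cU ≤ cUhat ω} ≥ ENNReal.ofReal (1 - α))
    (r : Ω → Bool) (hr : Measurable r)
    (hr1 : P {ω | r ω = true} = 1/2) (hr0 : P {ω | r ω = false} = 1/2)
    (hindep : IndepFun r (fun ω => (cLhat ω, cUhat ω)) P)
    (ε : ℝ) (hε : 0 < ε) (hmargin : ε < cL ∨ cU < -ε) :
    P {ω | classifyRC cL cU (r ω) ≠ classifyRC (cLhat ω) (cUhat ω) (r ω)}
      ≤ ENNReal.ofReal α + (1/2) * P {ω | cLhat ω - cL ≤ -ε}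
        + (1/2) * P {ω | cUhat ω - cU ≥ ε} := by
  set A := {ω | classifyRC cL cU (r ω) ≠ classifyRC (cLhat ω) (cUhat ω) (r ω)} with hA
  set C := {ω | cLhat ω ≤ cL ∧ cU ≤ cUhat ω} with hC
  have hCmeas : MeasurableSet C := by
    apply MeasurableSet.inter
    · exact measurableSet_le hmL measurable_const
    · exact measurableSet_le measurable_const hmU
  -- P(Cᶜ) ≤ α
  have hCc : P Cᶜ ≤ ENNReal.ofReal α := by
    rw [prob_compl_eq_one_sub hCmeas]
    rw [tsub_le_iff_right]
    calc (1 : ENNReal) = ENNReal.ofReal (α + (1 - α)) := by norm_num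
    _ ≤ ENNReal.ofReal α + ENNReal.ofReal (1 - α) := ENNReal.ofReal_add_le
    _ ≤ ENNReal.ofReal α + P C := by exact add_le_add_right hcov _
  have hsplit : P A ≤ P Cᶜ + P (A ∩ C) := by
    calc P A ≤ P (Cᶜ ∪ (A ∩ C)) := by
          apply measure_mono
          intro ω hω
          by_cases h : ω ∈ C
          · exact Or.inr ⟨hω, h⟩
          · exact Or.inl h
    _ ≤ P Cᶜ + P (A ∩ C) := measure_union_le _ _
  rcases hmargin with hm | hm
  · -- cL > ε : oracle is true; mismatch on C forces ĉL ≤ 0 and r = false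
    have hsub : A ∩ C ⊆ (r ⁻¹' {false}) ∩
        ((fun ω => (cLhat ω, cUhat ω)) ⁻¹' {p : ℝ × ℝ | p.1 - cL ≤ -ε}) := by
      rintro ω ⟨hωA, hωC⟩
      have hor : classifyRC cL cU (r ω) = true := by
        simp [classifyRC, hε.trans hm]
      have hLle : ¬ (0 < cLhat ω) := by
        intro hpos
        apply hωA
        rw [hor]
        simp [classifyRC, hpos]
      have hUge : ¬ (cUhat ω < 0) := by
        have : (0:ℝ) < cUhat ω := lt_of_lt_of_le ((hε.trans hm).trans hcc) hωC.2
        linarith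
      have hrf : r ω = false := by
        have hms : classifyRC (cLhat ω) (cUhat ω) (r ω) = r ω := by
          simp [classifyRC, hLle, hUge]
        rcases Bool.eq_false_or_eq_true (r ω) with h | h
        · exact absurd (by rw [hor, hms, h]) hωA
        · exact h
      refine ⟨hrf, ?_⟩
      simp only [Set.mem_preimage, Set.mem_setOf_eq]
      have : cLhat ω ≤ 0 := le_of_not_gt hLle
      linarith
    have hind := hindep.measure_inter_preimage_eq_mul ({false} : Set Bool)
      {p : ℝ × ℝ | p.1 - cL ≤ -ε} (by measurability)
      (by
        apply measurableSet_le (by fun_prop) measurable_const)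
    have hPB : P ((r ⁻¹' {false}) ∩
        ((fun ω => (cLhat ω, cUhat ω)) ⁻¹' {p : ℝ × ℝ | p.1 - cL ≤ -ε}))
        = (1/2) * P {ω | cLhat ω - cL ≤ -ε} := by
      rw [hind, show r ⁻¹' {false} = {ω | r ω = false} from rfl, hr0]
      rfl
    have hAC : P (A ∩ C) ≤ (1/2) * P {ω | cLhat ω - cL ≤ -ε} := by
      rw [← hPB]; exact measure_mono hsub
    calc P A ≤ P Cᶜ + P (A ∩ C) := hsplit
    _ ≤ ENNReal.ofReal α + (1/2) * P {ω | cLhat ω - cL ≤ -ε} := add_le_add hCc hAC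
    _ ≤ _ := le_self_add
  · -- cU < -ε : oracle is false; mismatch on C forces ĉU ≥ 0 and r = true
    have hcU0 : cU < 0 := by linarith
    have hcL0 : ¬ (0 < cL) := by linarith
    have hsub : A ∩ C ⊆ (r ⁻¹' {true}) ∩
        ((fun ω => (cLhat ω, cUhat ω)) ⁻¹' {p : ℝ × ℝ | p.2 - cU ≥ ε}) := by
      rintro ω ⟨hωA, hωC⟩
      have hor : classifyRC cL cU (r ω) = false := by
        simp [classifyRC, hcL0, hcU0]
      have hLle : ¬ (0 < cLhat ω) := by
        have : cLhat ω ≤ cL := hωC.1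
        linarith
      have hUge : ¬ (cUhat ω < 0) := by
        intro hneg
        apply hωA
        rw [hor]
        simp [classifyRC, hLle, hneg]
      have hrt : r ω = true := by
        have hms : classifyRC (cLhat ω) (cUhat ω) (r ω) = r ω := by
          simp [classifyRC, hLle, hUge]
        rcases Bool.eq_false_or_eq_true (r ω) with h | h
        · exact h
        · exact absurd (by rw [hor, hms, h]) hωA
      refine ⟨hrt, ?_⟩
      simp only [Set.mem_preimage, Set.mem_setOf_eq]
      have : (0:ℝ) ≤ cUhat ω := le_of_not_gt hUge
      linarith
    have hind := hindep.measure_inter_preimage_eq_mul ({true} : Set Bool)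
      {p : ℝ × ℝ | p.2 - cU ≥ ε} (by measurability)
      (by
        apply measurableSet_le measurable_const (by fun_prop))
    have hPB : P ((r ⁻¹' {true}) ∩
        ((fun ω => (cLhat ω, cUhat ω)) ⁻¹' {p : ℝ × ℝ | p.2 - cU ≥ ε}))
        = (1/2) * P {ω | cUhat ω - cU ≥ ε} := by
      rw [hind, show r ⁻¹' {true} = {ω | r ω = true} from rfl, hr1]
      rfl
    have hAC : P (A ∩ C) ≤ (1/2) * P {ω | cUhat ω - cU ≥ ε} := by
      rw [← hPB]; exact measure_mono hsub
    calc P A ≤ P Cᶜ + P (A ∩ C) := hsplit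
    _ ≤ ENNReal.ofReal α + (1/2) * P {ω | cUhat ω - cU ≥ ε} := add_le_add hCc hAC
    _ ≤ _ := by
        rw [add_assoc]
        exact add_le_add_right le_add_self _
end

section
/- Let (Ω, F, ℙ) be a probability space; let c_L < c_U be fixed real numbers, ĉ_L, ĉ_U real random variables, and 𝒞 the event { ĉ_L ≤ c_L and c_U ≤ ĉ_U } with ℙ(𝒞) ≥ 1 − α. Let r_OR and r_MS be {0,1}-valued random variables, each equal to 1 with probability 1/2, mutually independent and independent of (ĉ_L, ĉ_U). Define M_OR = 1 if c_L > 0, M_OR = 0 if c_U < 0, M_OR = r_OR if c_L ≤ 0 ≤ c_U; define M_MS = 1 if ĉ_L > 0, M_MS = 0 if ĉ_U < 0, M_MS = r_MS if ĉ_L ≤ 0 ≤ ĉ_U. Assume there exists ε > 0 such that either c_L > ε or c_U < −ε. Then ℙ(M_OR ≠ M_MS) ≤ α + (1/2)·ℙ(ĉ_L − c_L ≤ −ε) + (1/2)·ℙ(ĉ_U − c_U ≥ ε) + (1/2)·1[c_L ≤ 0 ≤ c_U]. -/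
open MeasureTheory ProbabilityTheory

theorem stmt7 {Ω : Type*} [MeasurableSpace Ω] (P : Measure Ω) [IsProbabilityMeasure P]
    (cL cU : ℝ) (hcc : cL < cU)
    (cLhat cUhat : Ω → ℝ) (hmL : Measurable cLhat) (hmU : Measurable cUhat)
    (α : ℝ)
    (hcov : P {ω | cLhat ω ≤ cL ∧ cU ≤ cUhat ω} ≥ ENNReal.ofReal (1 - α))
    (rOR rMS : Ω → Bool) (hrORm : Measurable rOR) (hrMSm : Measurable rMS)
    (hrOR1 : P {ω | rOR ω = true} = 1/2) (hrMS1 : P {ω | rMS ω = true} = 1/2)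
    (hrindep : IndepFun rOR rMS P)
    (hindep : IndepFun (fun ω => (rOR ω, rMS ω)) (fun ω => (cLhat ω, cUhat ω)) P)
    (ε : ℝ) (hε : 0 < ε) (hmargin : ε < cL ∨ cU < -ε) :
    P {ω | classifyRC cL cU (rOR ω) ≠ classifyRC (cLhat ω) (cUhat ω) (rMS ω)}
      ≤ ENNReal.ofReal α + (1/2) * P {ω | cLhat ω - cL ≤ -ε}
        + (1/2) * P {ω | cUhat ω - cU ≥ ε}
        + (1/2) * (if cL ≤ 0 ∧ 0 ≤ cU then (1 : ENNReal) else 0) := by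
  set C : Set Ω := {ω | cLhat ω ≤ cL ∧ cU ≤ cUhat ω} with hCdef
  have hCm : MeasurableSet C :=
    (measurableSet_le hmL measurable_const).inter (measurableSet_le measurable_const hmU)
  -- bound on complement of coverage event
  have h1 : (1 : ENNReal) ≤ ENNReal.ofReal α + P C := by
    calc (1 : ENNReal) = ENNReal.ofReal (α + (1 - α)) := by norm_num
      _ ≤ ENNReal.ofReal α + ENNReal.ofReal (1 - α) := ENNReal.ofReal_add_le
      _ ≤ ENNReal.ofReal α + P C := add_le_add_right hcov _
  have hPCc : P Cᶜ ≤ ENNReal.ofReal α := by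
    rw [measure_compl hCm (measure_ne_top P C), measure_univ]
    exact tsub_le_iff_right.mpr h1
  -- coin probabilities
  have hfalse : P {ω | rMS ω = false} = 1 / 2 := by
    have hset : {ω | rMS ω = false} = {ω | rMS ω = true}ᶜ := by
      ext ω; simp
    have hms : MeasurableSet {ω | rMS ω = true} := hrMSm (measurableSet_singleton true)
    rw [hset, measure_compl hms (measure_ne_top _ _), measure_univ, hrMS1]
    simp [one_div, ENNReal.one_sub_inv_two]
  -- independence of rMS with each bound estimator
  have hImsL : IndepFun rMS cLhat P := hindep.comp measurable_snd measurable_fst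
  have hImsU : IndepFun rMS cUhat P := hindep.comp measurable_snd measurable_snd
  rcases hmargin with hm | hm
  · -- case cL > ε > 0 : oracle classifies true
    have hcL0 : (0 : ℝ) < cL := lt_trans hε hm
    have hsub : {ω | classifyRC cL cU (rOR ω) ≠ classifyRC (cLhat ω) (cUhat ω) (rMS ω)}
        ⊆ Cᶜ ∪ ({ω | cLhat ω - cL ≤ -ε} ∩ {ω | rMS ω = false}) := by
      intro ω hω
      by_cases hωC : ω ∈ C
      · right
        obtain ⟨hL, hU⟩ := hωC
        have hOR : classifyRC cL cU (rOR ω) = true := by simp [classifyRC, hcL0]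
        have hMS : classifyRC (cLhat ω) (cUhat ω) (rMS ω) = false := by
          cases hx : classifyRC (cLhat ω) (cUhat ω) (rMS ω)
          · rfl
          · exact absurd (hOR.trans hx.symm) hω
        have hUpos : ¬ (cUhat ω < 0) := not_lt.mpr (le_trans (le_of_lt (lt_trans hcL0 hcc)) hU)
        have hLnonpos : ¬ (0 < cLhat ω) := by
          intro h; simp [classifyRC, h] at hMS
        refine ⟨?_, ?_⟩
        · show cLhat ω - cL ≤ -ε
          have := not_lt.mp hLnonpos
          linarith
        · show rMS ω = false
          simpa [classifyRC, hLnonpos, hUpos] using hMS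
      · exact Or.inl hωC
    have hkey : P ({ω | cLhat ω - cL ≤ -ε} ∩ {ω | rMS ω = false})
        = (1 / 2) * P {ω | cLhat ω - cL ≤ -ε} := by
      have hset : {ω | cLhat ω - cL ≤ -ε} = cLhat ⁻¹' Set.Iic (cL - ε) := by
        ext ω; simp only [Set.mem_setOf_eq, Set.mem_preimage, Set.mem_Iic]
        constructor <;> intro h <;> linarith
      have hind := hImsL.measure_inter_preimage_eq_mul ({false} : Set Bool)
        (Set.Iic (cL - ε)) (measurableSet_singleton _) measurableSet_Iic
      rw [hset, Set.inter_comm]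
      have : rMS ⁻¹' ({false} : Set Bool) = {ω | rMS ω = false} := rfl
      rw [this] at hind
      rw [hind, hfalse]
    calc P {ω | classifyRC cL cU (rOR ω) ≠ classifyRC (cLhat ω) (cUhat ω) (rMS ω)}
        ≤ P (Cᶜ ∪ ({ω | cLhat ω - cL ≤ -ε} ∩ {ω | rMS ω = false})) := measure_mono hsub
      _ ≤ P Cᶜ + P ({ω | cLhat ω - cL ≤ -ε} ∩ {ω | rMS ω = false}) := measure_union_le _ _
      _ ≤ ENNReal.ofReal α + (1 / 2) * P {ω | cLhat ω - cL ≤ -ε} := by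
          rw [hkey]; exact add_le_add_left hPCc _
      _ ≤ _ := le_add_right (le_add_right le_rfl)
  · -- case cU < -ε < 0 : oracle classifies false
    have hcU0 : cU < 0 := lt_trans hm (by linarith)
    have hsub : {ω | classifyRC cL cU (rOR ω) ≠ classifyRC (cLhat ω) (cUhat ω) (rMS ω)}
        ⊆ Cᶜ ∪ ({ω | cUhat ω - cU ≥ ε} ∩ {ω | rMS ω = true}) := by
      intro ω hω
      by_cases hωC : ω ∈ C
      · right
        obtain ⟨hL, hU⟩ := hωC
        have hOR : classifyRC cL cU (rOR ω) = false := by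
          simp [classifyRC, not_lt.mpr (le_of_lt (lt_trans hcc hcU0)), hcU0]
        have hMS : classifyRC (cLhat ω) (cUhat ω) (rMS ω) = true := by
          cases hx : classifyRC (cLhat ω) (cUhat ω) (rMS ω)
          · exact absurd (hOR.trans hx.symm) hω
          · rfl
        have hLnonpos : ¬ (0 < cLhat ω) :=
          not_lt.mpr (le_trans hL (le_of_lt (lt_trans hcc hcU0)))
        have hUnonneg : ¬ (cUhat ω < 0) := by
          intro h; simp [classifyRC, hLnonpos, h] at hMS
        refine ⟨?_, ?_⟩
        · show cUhat ω - cU ≥ ε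
          have := not_lt.mp hUnonneg
          linarith
        · show rMS ω = true
          simpa [classifyRC, hLnonpos, hUnonneg] using hMS
      · exact Or.inl hωC
    have hkey : P ({ω | cUhat ω - cU ≥ ε} ∩ {ω | rMS ω = true})
        = (1 / 2) * P {ω | cUhat ω - cU ≥ ε} := by
      have hset : {ω | cUhat ω - cU ≥ ε} = cUhat ⁻¹' Set.Ici (cU + ε) := by
        ext ω; simp only [Set.mem_setOf_eq, Set.mem_preimage, Set.mem_Ici, ge_iff_le]
        constructor <;> intro h <;> linarith
      have hind := hImsU.measure_inter_preimage_eq_mul ({true} : Set Bool)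
        (Set.Ici (cU + ε)) (measurableSet_singleton _) measurableSet_Ici
      rw [hset, Set.inter_comm]
      have : rMS ⁻¹' ({true} : Set Bool) = {ω | rMS ω = true} := rfl
      rw [this] at hind
      rw [hind, hrMS1]
    calc P {ω | classifyRC cL cU (rOR ω) ≠ classifyRC (cLhat ω) (cUhat ω) (rMS ω)}
        ≤ P (Cᶜ ∪ ({ω | cUhat ω - cU ≥ ε} ∩ {ω | rMS ω = true})) := measure_mono hsub
      _ ≤ P Cᶜ + P ({ω | cUhat ω - cU ≥ ε} ∩ {ω | rMS ω = true}) := measure_union_le _ _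
      _ ≤ ENNReal.ofReal α + (1 / 2) * P {ω | cUhat ω - cU ≥ ε} := by
          rw [hkey]; exact add_le_add_left hPCc _
      _ ≤ _ := by
          refine le_add_right ?_
          exact add_le_add_left (le_add_right le_rfl) _
end

section
/- Let q, J ≥ 1, B ⊆ ℝ^q, x_1, …, x_J ∈ ℝ^q, r ∈ ℝ^q, ĝ_1, …, ĝ_J ∈ ℝ, and s_1, …, s_J > 0. Let G = { g ∈ ℝ^J : ĝ_j − s_j ≤ g_j ≤ ĝ_j + s_j for all j } be the hyperrectangular confidence region. Then the projection of the bilinearly constrained feasible set onto b equals the linearly constrained set: { b ∈ B : there exists g ∈ G with g_j·(x_j'b) ≥ 0 for all j } = { b ∈ B : for all j, (ĝ_j − s_j > 0 implies x_j'b ≥ 0) and (ĝ_j + s_j < 0 implies x_j'b ≤ 0) }. Consequently, the supremum (respectively, infimum) of r'b over the first set equals the supremum (respectively, infimum) of r'b over the second set. -/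
theorem stmt9 (q J : ℕ) (hq : 1 ≤ q) (hJ : 1 ≤ J)
    (B : Set (Fin q → ℝ)) (x : Fin J → Fin q → ℝ) (r : Fin q → ℝ)
    (ghat s : Fin J → ℝ) (hs : ∀ j, 0 < s j) :
    {b ∈ B | ∃ g : Fin J → ℝ, (∀ j, ghat j - s j ≤ g j ∧ g j ≤ ghat j + s j) ∧
        ∀ j, 0 ≤ g j * ∑ i, x j i * b i}
      = {b ∈ B | ∀ j, (0 < ghat j - s j → 0 ≤ ∑ i, x j i * b i) ∧
          (ghat j + s j < 0 → (∑ i, x j i * b i) ≤ 0)} ∧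
    sSup ((fun b => ∑ i, r i * b i) ''
        {b ∈ B | ∃ g : Fin J → ℝ, (∀ j, ghat j - s j ≤ g j ∧ g j ≤ ghat j + s j) ∧
          ∀ j, 0 ≤ g j * ∑ i, x j i * b i})
      = sSup ((fun b => ∑ i, r i * b i) ''
        {b ∈ B | ∀ j, (0 < ghat j - s j → 0 ≤ ∑ i, x j i * b i) ∧
          (ghat j + s j < 0 → (∑ i, x j i * b i) ≤ 0)}) ∧
    sInf ((fun b => ∑ i, r i * b i) ''
        {b ∈ B | ∃ g : Fin J → ℝ, (∀ j, ghat j - s j ≤ g j ∧ g j ≤ ghat j + s j) ∧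
          ∀ j, 0 ≤ g j * ∑ i, x j i * b i})
      = sInf ((fun b => ∑ i, r i * b i) ''
        {b ∈ B | ∀ j, (0 < ghat j - s j → 0 ≤ ∑ i, x j i * b i) ∧
          (ghat j + s j < 0 → (∑ i, x j i * b i) ≤ 0)}) := by
  have hset : {b ∈ B | ∃ g : Fin J → ℝ, (∀ j, ghat j - s j ≤ g j ∧ g j ≤ ghat j + s j) ∧
        ∀ j, 0 ≤ g j * ∑ i, x j i * b i}
      = {b ∈ B | ∀ j, (0 < ghat j - s j → 0 ≤ ∑ i, x j i * b i) ∧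
          (ghat j + s j < 0 → (∑ i, x j i * b i) ≤ 0)} := by
    ext b
    simp only [Set.mem_setOf_eq]
    constructor
    · rintro ⟨hB, g, hbox, hpos⟩
      refine ⟨hB, fun j => ⟨fun h1 => ?_, fun h2 => ?_⟩⟩
      · have hg : 0 < g j := lt_of_lt_of_le h1 (hbox j).1
        exact nonneg_of_mul_nonneg_right (hpos j) hg
      · have hg : g j < 0 := lt_of_le_of_lt (hbox j).2 h2
        nlinarith [hpos j]
    · rintro ⟨hB, h⟩
      refine ⟨hB, fun j => if ghat j - s j ≤ 0 ∧ 0 ≤ ghat j + s j then 0 else ghat j,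
        fun j => ?_, fun j => ?_⟩ <;> by_cases hc : ghat j - s j ≤ 0 ∧ 0 ≤ ghat j + s j <;>
        simp only [hc, if_true, if_false] <;>
        [skip; skip; simp; skip]
      · exact ⟨hc.1, hc.2⟩
      · constructor <;> nlinarith [hs j]
      · push_neg at hc
        rcases le_or_gt (ghat j - s j) 0 with h1 | h1
        · have h2 := hc h1
          have := (h j).2 h2
          nlinarith [hs j]
        · have := (h j).1 h1
          nlinarith [hs j]
  exact ⟨hset, by rw [hset], by rw [hset]⟩
end

section
/- Let (Ω, F, ℙ) be a probability space carrying random elements Y (real-valued, integrable), X (with countable range), V, V_0, V_1 (each ℝ^{q_V}-valued), and let W = (X, V_0, V_1). Suppose: (I) ℙ(V_0 ≤ V ≤ V_1) = 1, where the inequalities hold componentwise; (M and MI) there exists a measurable function m(x, v) that is weakly increasing in v with respect to the componentwise partial order on ℝ^{q_V}, such that the conditional expectation of Y given the σ-algebra generated by (X, V, V_0, V_1) equals m(X, V) almost surely. Then for every w = (x, v_0, v_1) with ℙ(W = w) > 0: m(x, v_0) ≤ E[ Y · 1{W = w} ] / ℙ(W = w) ≤ m(x, v_1); that is, E(Y |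 X = x, V = v_0) ≤ E(Y | W = w) ≤ E(Y | X = x, V = v_1). -/
open MeasureTheory

theorem stmt10 {Ω : Type*} [m0 : MeasurableSpace Ω] (P : Measure Ω) [IsProbabilityMeasure P]
    (qX qV : ℕ)
    (Y : Ω → ℝ) (hYint : Integrable Y P)
    (X : Ω → (Fin qX → ℝ)) (hX : Measurable X) (hXcount : (Set.range X).Countable)
    (V V0 V1 : Ω → (Fin qV → ℝ))
    (hV : Measurable V) (hV0 : Measurable V0) (hV1 : Measurable V1)
    -- Interval (I): V0 ≤ V ≤ V1 componentwise almost surely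
    (hI : P {ω | V0 ω ≤ V ω ∧ V ω ≤ V1 ω} = 1)
    (m : (Fin qX → ℝ) → (Fin qV → ℝ) → ℝ)
    (hmmeas : Measurable fun pr : (Fin qX → ℝ) × (Fin qV → ℝ) => m pr.1 pr.2)
    -- Monotonicity (M): m(x, ·) is weakly increasing in v (componentwise order)
    (hmono : ∀ x, Monotone (m x))
    -- (M and MI): E[Y ∣ σ(X, V, V0, V1)] = m(X, V) almost surely
    (hMI : P[Y | MeasurableSpace.comap (fun ω => (X ω, V ω, V0 ω, V1 ω)) inferInstance]
      =ᵐ[P] fun ω => m (X ω) (V ω)) :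
    ∀ x v0 v1, 0 < P {ω | X ω = x ∧ V0 ω = v0 ∧ V1 ω = v1} →
      m x v0 ≤ (∫ ω in {ω | X ω = x ∧ V0 ω = v0 ∧ V1 ω = v1}, Y ω ∂P)
          / (P {ω | X ω = x ∧ V0 ω = v0 ∧ V1 ω = v1}).toReal ∧
      (∫ ω in {ω | X ω = x ∧ V0 ω = v0 ∧ V1 ω = v1}, Y ω ∂P)
          / (P {ω | X ω = x ∧ V0 ω = v0 ∧ V1 ω = v1}).toReal ≤ m x v1 := by
  intro x v0 v1 hpos
  set A := {ω | X ω = x ∧ V0 ω = v0 ∧ V1 ω = v1} with hA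
  have hmeasmap : Measurable fun ω => (X ω, V ω, V0 ω, V1 ω) :=
    hX.prodMk (hV.prodMk (hV0.prodMk hV1))
  have hmle : MeasurableSpace.comap (fun ω => (X ω, V ω, V0 ω, V1 ω)) inferInstance ≤ m0 :=
    hmeasmap.comap_le
  have hAmeasΓ : MeasurableSet[MeasurableSpace.comap
      (fun ω => (X ω, V ω, V0 ω, V1 ω)) inferInstance] A := by
    refine ⟨{x} ×ˢ (Set.univ ×ˢ ({v0} ×ˢ {v1})), ?_, ?_⟩
    · exact (measurableSet_singleton x).prod
        (MeasurableSet.univ.prod ((measurableSet_singleton v0).prod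
          (measurableSet_singleton v1)))
    · ext ω; simp only [Set.mem_preimage, Set.mem_prod, Set.mem_singleton_iff, Set.mem_univ, true_and, hA, Set.mem_setOf_eq]
  have hAmeas : MeasurableSet A := hmle _ hAmeasΓ
  set f : Ω → ℝ := fun ω => m (X ω) (V ω) with hf
  have hfint : Integrable f P := (integrable_condExp).congr hMI
  have hint : ∫ ω in A, Y ω ∂P = ∫ ω in A, f ω ∂P := by
    rw [← setIntegral_condExp hmle hYint hAmeasΓ]
    exact setIntegral_congr_ae hAmeas (hMI.mono fun ω h _ => h)
  -- a.e. bounds on the restricted measure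
  have hSmeas : MeasurableSet {ω | V0 ω ≤ V ω ∧ V ω ≤ V1 ω} :=
    (measurableSet_le hV0 hV).inter (measurableSet_le hV hV1)
  have hSae : ∀ᵐ ω ∂P, V0 ω ≤ V ω ∧ V ω ≤ V1 ω := by
    rw [Filter.eventually_iff, mem_ae_iff]
    rw [measure_compl hSmeas (measure_ne_top P _), hI]
    simp
  have hlb : ∀ᵐ ω ∂(P.restrict A), m x v0 ≤ f ω := by
    filter_upwards [ae_restrict_of_ae hSae, ae_restrict_mem hAmeas] with ω h hω
    obtain ⟨hx, h0, h1⟩ := hω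
    rw [hf]; dsimp only
    rw [hx]
    exact hmono x (h0 ▸ h.1)
  have hub : ∀ᵐ ω ∂(P.restrict A), f ω ≤ m x v1 := by
    filter_upwards [ae_restrict_of_ae hSae, ae_restrict_mem hAmeas] with ω h hω
    obtain ⟨hx, h0, h1⟩ := hω
    rw [hf]; dsimp only
    rw [hx]
    exact hmono x (h1 ▸ h.2)
  have hconst : ∀ c : ℝ, ∫ _ in A, c ∂P = c * (P A).toReal := by
    intro c
    rw [setIntegral_const, smul_eq_mul, mul_comm]; rfl
  have h1 : m x v0 * (P A).toReal ≤ ∫ ω in A, f ω ∂P := by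
    have := integral_mono_ae (integrable_const (m x v0)) hfint.integrableOn hlb
    rwa [hconst] at this
  have h2 : ∫ ω in A, f ω ∂P ≤ m x v1 * (P A).toReal := by
    have := integral_mono_ae hfint.integrableOn (integrable_const (m x v1)) hub
    rwa [hconst] at this
  have hp : 0 < (P A).toReal := ENNReal.toReal_pos hpos.ne' (measure_ne_top P A)
  constructor
  · rw [le_div_iff₀ hp, hint]; exact h1
  · rw [div_le_iff₀ hp, hint]; exact h2
end
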